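/- Let 0 ≤ α_1, α_2, α_3, α_4 ≤ 1 and 0 < ε ≤ 1/1000 be reals, and define G(α_1,α_2,α_3,α_4) := Σ over (j_1,j_2,j_3,j_4) ∈ F_2^4 with j_1+j_2+j_3+j_4 = 0 of ∏_{i=1}^4 α_{i,j_i}^{3/4}, where α_{i,0} := α_i and α_{i,1} := 1−α_i. If G(α_1,α_2,α_3,α_4) ≥ 1−ε, then either all four α_i are within 3√ε of 1/2, or all four quantities min(α_i, 1−α_i) are at most 10ε. -/

import Mathlib

/-!
Summing over the even tuples against the sign character of `ZMod 2` gives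
`2 G(α) = ∏ᵢ (aᵢ + bᵢ) + ∏ᵢ (aᵢ - bᵢ)` with `aᵢ = αᵢ^{3/4}`, `bᵢ = (1 - αᵢ)^{3/4}`.
Write `min(αᵢ, 1 - αᵢ) = p⁴` and `max(αᵢ, 1 - αᵢ) = q⁴`. Then `(a ± b)² = h ± r` for the vector
`(h, r) = (p⁶ + q⁶, 2p³q³)`, whose squared length is `1 - 3D` with defect `D = (pq)⁴(p² - q²)²`.
Splitting the four coordinates into two pairs, AM-GM bounds `2 G(α)` by the sum over the pairs
of `h h' + r r' ≤ 1 - (3/2)(D + D')`. Pair a coordinate far from `1/2` with one that is not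
small: one of the two defects is then `≥ (8/3) ε`, unless the far coordinate is tiny and the
other one is close to `1/2`, and then the two vectors are far from parallel,
`h h' + r r' ≤ 9/10`. Hence `G(α) ≤ 1 - 2ε`.
-/

open Finset

/-- G(α₁,α₂,α₃,α₄) := Σ over (j₁,j₂,j₃,j₄) ∈ 𝔽₂⁴ with j₁+j₂+j₃+j₄ = 0 of
∏ᵢ α_{i,jᵢ}^{3/4}, where α_{i,0} := αᵢ and α_{i,1} := 1-αᵢ. -/
noncomputable def G (α : Fin 4 → ℝ) : ℝ :=
  ∑ j : Fin 4 → ZMod 2,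
    if j 0 + j 1 + j 2 + j 3 = 0 then
      ∏ i, (if j i = 0 then α i else 1 - α i) ^ ((3 : ℝ) / 4)
    else 0

open Real

lemma ZMod.eq_zero_or_eq_one (t : ZMod 2) : t = 0 ∨ t = 1 := by decide +revert

def zmodTwoSign : AddChar (ZMod 2) ℝ where
  toFun t := if t = 0 then 1 else -1
  map_zero_eq_one' := rfl
  map_add_eq_mul' a b := by
    rcases a.eq_zero_or_eq_one with rfl | rfl <;>
      rcases b.eq_zero_or_eq_one with rfl | rfl <;> simp +decide

lemma zmodTwoSign_apply (t : ZMod 2) : zmodTwoSign t = if t = 0 then 1 else -1 := rfl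

lemma zmodTwoSign_sum {ι : Type*} (s : Finset ι) (j : ι → ZMod 2) :
    zmodTwoSign (∑ i ∈ s, j i) = ∏ i ∈ s, zmodTwoSign (j i) := by
  classical
  induction s using Finset.induction_on with
  | empty => simp
  | insert i s hi ih => rw [sum_insert hi, prod_insert hi, AddChar.map_add_eq_mul, ih]

lemma sum_prod_zmodTwo {ι : Type*} [Fintype ι] [DecidableEq ι] (f : ι → ZMod 2 → ℝ) :
    ∑ j : ι → ZMod 2, ∏ i, f i (j i) = ∏ i, (f i 0 + f i 1) :=
  (Fintype.prod_sum (κ := fun _ => ZMod 2) f).symm.trans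
    (prod_congr rfl fun i _ => Fin.sum_univ_two (f i))

lemma sum_ite_sum_eq_zero_prod {ι : Type*} [Fintype ι] [DecidableEq ι] (a b : ι → ℝ) :
    ∑ j : ι → ZMod 2, (if ∑ i, j i = 0 then ∏ i, (if j i = 0 then a i else b i) else 0) =
      (∏ i, (a i + b i) + ∏ i, (a i - b i)) / 2 := by
  have indicator (t : ZMod 2) : (if t = 0 then (1 : ℝ) else 0) = (1 + zmodTwoSign t) / 2 := by
    rcases t.eq_zero_or_eq_one with rfl | rfl <;> norm_num +decide [zmodTwoSign_apply]
  have h_all := sum_prod_zmodTwo fun i t => if t = 0 then a i else b i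
  have h_signed := sum_prod_zmodTwo fun i t => zmodTwoSign t * if t = 0 then a i else b i
  simp only [prod_mul_distrib, ← zmodTwoSign_sum] at h_signed
  calc _ = ∑ j : ι → ZMod 2, (1 + zmodTwoSign (∑ i, j i)) / 2 *
          ∏ i, (if j i = 0 then a i else b i) :=
        sum_congr rfl fun j _ => by rw [← indicator, boole_mul]
    _ = (∑ j : ι → ZMod 2, ∏ i, (if j i = 0 then a i else b i) + ∑ j : ι → ZMod 2,
          zmodTwoSign (∑ i, j i) * ∏ i, (if j i = 0 then a i else b i)) / 2 := by
        rw [← sum_add_distrib, sum_div]; exact sum_congr rfl fun j _ => by ring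
    _ = _ := by rw [h_all, h_signed]; simp [zmodTwoSign_apply, sub_eq_add_neg]

noncomputable def plusFactor (t : ℝ) : ℝ := t ^ ((3 : ℝ) / 4) + (1 - t) ^ ((3 : ℝ) / 4)

noncomputable def minusFactor (t : ℝ) : ℝ := t ^ ((3 : ℝ) / 4) - (1 - t) ^ ((3 : ℝ) / 4)

lemma G_eq (α : Fin 4 → ℝ) :
    G α = (∏ i, plusFactor (α i) + ∏ i, minusFactor (α i)) / 2 := by
  have h := sum_ite_sum_eq_zero_prod (fun i => α i ^ ((3 : ℝ) / 4))
    (fun i => (1 - α i) ^ ((3 : ℝ) / 4))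
  simp only [Fin.sum_univ_four] at h
  simp only [G, apply_ite (· ^ ((3 : ℝ) / 4)), h, plusFactor, minusFactor]

lemma G_comp_perm (α : Fin 4 → ℝ) (σ : Equiv.Perm (Fin 4)) : G (α ∘ σ) = G α := by
  simp only [G_eq, Function.comp_apply, Equiv.prod_comp σ (fun i => plusFactor (α i)),
    Equiv.prod_comp σ (fun i => minusFactor (α i))]

def quarticDefect (p q : ℝ) : ℝ := (p * q) ^ 4 * (p ^ 2 - q ^ 2) ^ 2

def quarticInner (p q p' q' : ℝ) : ℝ :=
  (p ^ 6 + q ^ 6) * (p' ^ 6 + q' ^ 6) + (2 * p ^ 3 * q ^ 3) * (2 * p' ^ 3 * q' ^ 3)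

section Quartic

variable {p q p' q' d : ℝ}

lemma quarticDefect_nonneg : 0 ≤ quarticDefect p q := by unfold quarticDefect; positivity

lemma sq_add_sq_eq_one_sub_quarticDefect (h : p ^ 4 + q ^ 4 = 1) :
    (p ^ 6 + q ^ 6) ^ 2 + (2 * p ^ 3 * q ^ 3) ^ 2 = 1 - 3 * quarticDefect p q := by
  unfold quarticDefect
  linear_combination ((p ^ 4 + q ^ 4) ^ 2 + (p ^ 4 + q ^ 4) + 1) * h

lemma quarticInner_le (h : p ^ 4 + q ^ 4 = 1) (h' : p' ^ 4 + q' ^ 4 = 1) :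
    quarticInner p q p' q' ≤ 1 - 3 / 2 * (quarticDefect p q + quarticDefect p' q') := by
  unfold quarticInner
  nlinarith [sq_nonneg (p ^ 6 + q ^ 6 - (p' ^ 6 + q' ^ 6)),
    sq_nonneg (2 * p ^ 3 * q ^ 3 - 2 * p' ^ 3 * q' ^ 3),
    sq_add_sq_eq_one_sub_quarticDefect h, sq_add_sq_eq_one_sub_quarticDefect h']

lemma quarticDefect_ge_of_le (h : p ^ 4 + q ^ 4 = 1) (hp : p ^ 4 ≤ 1 / 200) :
    p ^ 4 / 2 ≤ quarticDefect p q := by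
  have hs : (p ^ 2 * q ^ 2) ^ 2 ≤ 1 / 200 := by nlinarith [pow_nonneg (sq_nonneg p) 2]
  have hs' : p ^ 2 * q ^ 2 ≤ 1 / 10 := by nlinarith [sq_nonneg (p ^ 2 * q ^ 2)]
  have hdiff : 4 / 5 ≤ (p ^ 2 - q ^ 2) ^ 2 := by nlinarith
  have hprod : 199 / 200 * p ^ 4 ≤ (p * q) ^ 4 := by nlinarith [pow_nonneg (sq_nonneg p) 2]
  unfold quarticDefect
  nlinarith [mul_le_mul hprod hdiff (by norm_num) (by positivity), pow_nonneg (sq_nonneg p) 2]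

lemma quarticDefect_ge_of_mem_Icc (h : p ^ 4 + q ^ 4 = 1) (hlo : 1 / 200 ≤ p ^ 4)
    (hhi : p ^ 4 ≤ 2 / 5) : 3 / 1000 ≤ quarticDefect p q := by
  have hs0 : 0 ≤ p ^ 2 * q ^ 2 := by positivity
  have hslo : 1 / 15 ≤ p ^ 2 * q ^ 2 := by
    nlinarith [mul_nonneg (sub_nonneg.2 hlo) (sub_nonneg.2 hhi)]
  have hshi : p ^ 2 * q ^ 2 ≤ 49 / 100 := by
    nlinarith [mul_nonneg (sub_nonneg.2 hlo) (sub_nonneg.2 hhi)]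
  have hD : quarticDefect p q = (p ^ 2 * q ^ 2) ^ 2 * (1 - 2 * (p ^ 2 * q ^ 2)) := by
    unfold quarticDefect; linear_combination (p ^ 4 * q ^ 4) * h
  rw [hD]
  nlinarith [mul_nonneg (mul_nonneg (sub_nonneg.2 hslo) (sub_nonneg.2 hshi)) hs0]

lemma quarticDefect_ge_of_near_half (h : p ^ 4 + q ^ 4 = 1) (hd : 0 ≤ d)
    (hlo : 2 / 5 ≤ p ^ 4) (hhi : p ^ 4 ≤ 1 / 2 - 3 * d) : 4 * d ^ 2 ≤ quarticDefect p q := by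
  have hprod : 6 / 25 ≤ (p * q) ^ 4 := by nlinarith
  have hsum : (p ^ 2 + q ^ 2) ^ 2 ≤ 2 := by nlinarith [sq_nonneg (p ^ 2 - q ^ 2)]
  -- `(p² - q²)(p² + q²) = p⁴ - q⁴ = 1 - 2p⁴ ≥ 6d`
  have hgap : 36 * d ^ 2 ≤ ((p ^ 2 - q ^ 2) * (p ^ 2 + q ^ 2)) ^ 2 := by nlinarith
  have hdiff : 18 * d ^ 2 ≤ (p ^ 2 - q ^ 2) ^ 2 := by nlinarith [sq_nonneg (p ^ 2 - q ^ 2)]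
  unfold quarticDefect
  nlinarith [mul_le_mul hprod hdiff (by positivity) (by positivity)]

lemma quarticDefect_ge (h : p ^ 4 + q ^ 4 = 1) (hd : 0 ≤ d) (hd1 : d ^ 2 ≤ 1 / 1000)
    (hlo : 10 * d ^ 2 ≤ p ^ 4) (hhi : p ^ 4 ≤ 1 / 2 - 3 * d) :
    8 / 3 * d ^ 2 ≤ quarticDefect p q := by
  rcases le_total (p ^ 4) (1 / 200) with h₁ | h₁
  · linarith [quarticDefect_ge_of_le h h₁, sq_nonneg d]
  rcases le_total (p ^ 4) (2 / 5) with h₂ | h₂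
  · linarith [quarticDefect_ge_of_mem_Icc h h₁ h₂]
  · linarith [quarticDefect_ge_of_near_half h hd h₂ hhi, sq_nonneg d]

lemma quarticInner_le_of_small_of_near_half (hp : 0 ≤ p) (hq : 0 ≤ q) (hp' : 0 ≤ p')
    (hq' : 0 ≤ q') (h : p ^ 4 + q ^ 4 = 1) (h' : p' ^ 4 + q' ^ 4 = 1)
    (hsmall : p ^ 4 ≤ 1 / 100) (hlo : 2 / 5 ≤ p' ^ 4) (hhi : p' ^ 4 ≤ 1 / 2) :
    quarticInner p q p' q' ≤ 9 / 10 := by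
  have hp2 : p ^ 2 ≤ 1 / 10 := by nlinarith [sq_nonneg (p ^ 2)]
  have hq2 : q ^ 2 ≤ 1 := by nlinarith [sq_nonneg (q ^ 2), pow_nonneg hp 4]
  have hp'2 : p' ^ 2 ≤ 4 / 5 := by nlinarith [sq_nonneg (p' ^ 2)]
  have hq'2 : q' ^ 2 ≤ 4 / 5 := by nlinarith [sq_nonneg (q' ^ 2)]
  have hp3 : p ^ 3 ≤ 1 / 30 := by nlinarith
  have hq3 : q ^ 3 ≤ 1 := by nlinarith
  have hh : p ^ 6 + q ^ 6 ≤ 1 := by nlinarith [pow_nonneg hp 4, pow_nonneg hq 4]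
  have hh' : p' ^ 6 + q' ^ 6 ≤ 4 / 5 := by nlinarith [pow_nonneg hp' 4, pow_nonneg hq' 4]
  have hr : 2 * p ^ 3 * q ^ 3 ≤ 1 / 15 := by nlinarith [pow_nonneg hp 3, pow_nonneg hq 3]
  have hr' : 2 * p' ^ 3 * q' ^ 3 ≤ 4 / 5 := by nlinarith [sq_nonneg (p' ^ 3 - q' ^ 3)]
  unfold quarticInner
  nlinarith [mul_le_mul hh hh' (by positivity) zero_le_one,
    mul_le_mul hr hr' (by positivity) (by norm_num)]

lemma quarticInner_le_of_far_of_not_small (hp : 0 ≤ p) (hq : 0 ≤ q) (hp' : 0 ≤ p')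
    (hq' : 0 ≤ q') (h : p ^ 4 + q ^ 4 = 1) (h' : p' ^ 4 + q' ^ 4 = 1) (hd : 0 ≤ d)
    (hd1 : d ^ 2 ≤ 1 / 1000) (hfar : p ^ 4 ≤ 1 / 2 - 3 * d) (hns : 10 * d ^ 2 ≤ p' ^ 4)
    (hhalf : p' ^ 4 ≤ 1 / 2) : quarticInner p q p' q' ≤ 1 - 4 * d ^ 2 := by
  have hinner := quarticInner_le h h'
  have hD := quarticDefect_nonneg (p := p) (q := q)
  have hD' := quarticDefect_nonneg (p := p') (q := q')
  rcases le_total (10 * d ^ 2) (p ^ 4) with hx | hx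
  · linarith [quarticDefect_ge h hd hd1 hx hfar]
  rcases le_total (p' ^ 4) (1 / 2 - 3 * d) with hy | hy
  · linarith [quarticDefect_ge h' hd hd1 hns hy]
  have hd_le : d ≤ 1 / 30 := by nlinarith
  linarith [quarticInner_le_of_small_of_near_half hp hq hp' hq' h h' (by linarith)
    (by linarith) hhalf]

end Quartic

lemma exists_quartic_param {x : ℝ} (hx0 : 0 ≤ x) (hx1 : x ≤ 1) :
    ∃ p q : ℝ, 0 ≤ p ∧ 0 ≤ q ∧ p ^ 4 + q ^ 4 = 1 ∧ p ^ 4 = min x (1 - x) ∧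
      plusFactor x = p ^ 3 + q ^ 3 ∧ minusFactor x ^ 2 = (p ^ 3 - q ^ 3) ^ 2 := by
  have root_pow {t : ℝ} (ht : 0 ≤ t) (n : ℕ) : (t ^ ((1 : ℝ) / 4)) ^ n = t ^ ((n : ℝ) / 4) := by
    rw [← rpow_natCast, ← rpow_mul ht]; ring_nf
  have hx1' : 0 ≤ 1 - x := by linarith
  set p := x ^ ((1 : ℝ) / 4)
  set q := (1 - x) ^ ((1 : ℝ) / 4)
  have hp4 : p ^ 4 = x := by rw [root_pow hx0]; norm_num
  have hq4 : q ^ 4 = 1 - x := by rw [root_pow hx1']; norm_num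
  have hplus : plusFactor x = p ^ 3 + q ^ 3 := by
    rw [root_pow hx0, root_pow hx1', plusFactor]; norm_num
  have hminus : minusFactor x = p ^ 3 - q ^ 3 := by
    rw [root_pow hx0, root_pow hx1', minusFactor]; norm_num
  have hp := rpow_nonneg hx0 ((1 : ℝ) / 4)
  have hq := rpow_nonneg hx1' ((1 : ℝ) / 4)
  rcases le_total x (1 - x) with hle | hle
  · exact ⟨p, q, hp, hq, by rw [hp4, hq4]; ring, by rw [hp4, min_eq_left hle], hplus,
      by rw [hminus]⟩
  · exact ⟨q, p, hq, hp, by rw [hp4, hq4]; ring, by rw [hq4, min_eq_right hle],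
      by rw [hplus]; ring, by rw [hminus]; ring⟩

lemma factor_pair_eq {x y p q p' q' : ℝ} (hx : plusFactor x = p ^ 3 + q ^ 3)
    (hx' : minusFactor x ^ 2 = (p ^ 3 - q ^ 3) ^ 2) (hy : plusFactor y = p' ^ 3 + q' ^ 3)
    (hy' : minusFactor y ^ 2 = (p' ^ 3 - q' ^ 3) ^ 2) :
    (plusFactor x * plusFactor y) ^ 2 + (minusFactor x * minusFactor y) ^ 2 =
      2 * quarticInner p q p' q' := by
  rw [mul_pow, mul_pow, hx, hy, hx', hy', quarticInner]; ring

lemma factor_pair_le_two {x y : ℝ} (hx0 : 0 ≤ x) (hx1 : x ≤ 1) (hy0 : 0 ≤ y) (hy1 : y ≤ 1) :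
    (plusFactor x * plusFactor y) ^ 2 + (minusFactor x * minusFactor y) ^ 2 ≤ 2 := by
  obtain ⟨p, q, -, -, h, -, hx, hx'⟩ := exists_quartic_param hx0 hx1
  obtain ⟨p', q', -, -, h', -, hy, hy'⟩ := exists_quartic_param hy0 hy1
  rw [factor_pair_eq hx hx' hy hy']
  linarith [quarticInner_le h h', quarticDefect_nonneg (p := p) (q := q),
    quarticDefect_nonneg (p := p') (q := q')]

lemma factor_pair_le_of_far_of_not_small {x y d : ℝ} (hx0 : 0 ≤ x) (hx1 : x ≤ 1)
    (hy0 : 0 ≤ y) (hy1 : y ≤ 1) (hd : 0 ≤ d) (hd1 : d ^ 2 ≤ 1 / 1000)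
    (hfar : min x (1 - x) ≤ 1 / 2 - 3 * d) (hns : 10 * d ^ 2 ≤ min y (1 - y)) :
    (plusFactor x * plusFactor y) ^ 2 + (minusFactor x * minusFactor y) ^ 2 ≤ 2 - 8 * d ^ 2 := by
  obtain ⟨p, q, hp, hq, h, hmin, hx, hx'⟩ := exists_quartic_param hx0 hx1
  obtain ⟨p', q', hp', hq', h', hmin', hy, hy'⟩ := exists_quartic_param hy0 hy1
  rw [factor_pair_eq hx hx' hy hy']
  have hhalf : p' ^ 4 ≤ 1 / 2 := by
    linarith [hmin' ▸ min_le_left y (1 - y), hmin' ▸ min_le_right y (1 - y)]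
  linarith [quarticInner_le_of_far_of_not_small hp hq hp' hq' h h' hd hd1 (hmin ▸ hfar)
    (hmin' ▸ hns) hhalf]

lemma Equiv.Perm.exists_apply_eq_and_apply_eq {β : Type*} [DecidableEq β] {a b k l : β}
    (hab : a ≠ b) (hkl : k ≠ l) : ∃ σ : Equiv.Perm β, σ a = k ∧ σ b = l := by
  set τ := Equiv.swap a k
  have hτb : τ b ≠ k := fun h => hab (τ.injective (h.trans (Equiv.swap_apply_left a k).symm)).symm
  refine ⟨Equiv.swap (τ b) l * τ, ?_, Equiv.swap_apply_left _ _⟩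
  rw [Equiv.Perm.mul_apply, Equiv.swap_apply_left, Equiv.swap_apply_of_ne_of_ne hτb.symm hkl]

lemma G_le_of_far_of_not_small {α : Fin 4 → ℝ} {d : ℝ} (hα0 : ∀ i, 0 ≤ α i)
    (hα1 : ∀ i, α i ≤ 1) (hd : 0 ≤ d) (hd1 : d ^ 2 ≤ 1 / 1000) {k l : Fin 4} (hkl : k ≠ l)
    (hfar : min (α k) (1 - α k) ≤ 1 / 2 - 3 * d) (hns : 10 * d ^ 2 ≤ min (α l) (1 - α l)) :
    G α ≤ 1 - 2 * d ^ 2 := by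
  obtain ⟨σ, rfl, rfl⟩ := Equiv.Perm.exists_apply_eq_and_apply_eq (zero_ne_one' (Fin 4)) hkl
  have h01 := factor_pair_le_of_far_of_not_small (hα0 _) (hα1 _) (hα0 _) (hα1 _) hd hd1 hfar hns
  have h23 := factor_pair_le_two (hα0 (σ 2)) (hα1 _) (hα0 (σ 3)) (hα1 _)
  rw [← G_comp_perm α σ, G_eq]
  simp only [Fin.prod_univ_four, Function.comp_apply]
  nlinarith [two_mul_le_add_sq (plusFactor (α (σ 0)) * plusFactor (α (σ 1)))
      (plusFactor (α (σ 2)) * plusFactor (α (σ 3))),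
    two_mul_le_add_sq (minusFactor (α (σ 0)) * minusFactor (α (σ 1)))
      (minusFactor (α (σ 2)) * minusFactor (α (σ 3)))]

lemma min_one_sub_eq_half_sub_abs (x : ℝ) : min x (1 - x) = 1 / 2 - |x - 1 / 2| := by
  rcases le_total x (1 / 2) with h | h
  · rw [min_eq_left (by linarith), abs_of_nonpos (by linarith)]; ring
  · rw [min_eq_right (by linarith), abs_of_nonneg (by linarith)]; ring

theorem stmt_5 {α : Fin 4 → ℝ} {ε : ℝ}
    (hα0 : ∀ i, 0 ≤ α i) (hα1 : ∀ i, α i ≤ 1)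
    (hε0 : 0 < ε) (hε1 : ε ≤ 1 / 1000)
    (hG : 1 - ε ≤ G α) :
    (∀ i, |α i - 1 / 2| ≤ 3 * Real.sqrt ε) ∨
      (∀ i, min (α i) (1 - α i) ≤ 10 * ε) := by
  by_contra! hcon
  obtain ⟨⟨k, hk⟩, ⟨l, hl⟩⟩ := hcon
  set d := √ε
  have hd : 0 ≤ d := sqrt_nonneg ε
  have hd2 : d ^ 2 = ε := sq_sqrt hε0.le
  have hd1 : d ^ 2 ≤ 1 / 1000 := hd2 ▸ hε1
  have hfar : min (α k) (1 - α k) ≤ 1 / 2 - 3 * d := by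
    rw [min_one_sub_eq_half_sub_abs]; linarith
  have hns : 10 * d ^ 2 ≤ min (α l) (1 - α l) := hd2 ▸ hl.le
  obtain ⟨k, l, hkl, hfar, hns⟩ : ∃ k l : Fin 4, k ≠ l ∧ min (α k) (1 - α k) ≤ 1 / 2 - 3 * d ∧
      10 * d ^ 2 ≤ min (α l) (1 - α l) := by
    by_cases hkl : k = l
    · subst hkl
      have hne : k + 1 ≠ k := (by decide : ∀ j : Fin 4, j + 1 ≠ j) k
      -- a coordinate that is not far from `1/2` is not small either
      rcases le_total (min (α (k + 1)) (1 - α (k + 1))) (1 / 2 - 3 * d) with hj | hj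
      · exact ⟨k + 1, k, hne, hj, hns⟩
      · exact ⟨k, k + 1, hne.symm, hfar, by nlinarith⟩
    · exact ⟨k, l, hkl, hfar, hns⟩
  linarith [G_le_of_far_of_not_small hα0 hα1 hd hd1 hkl hfar hns]
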